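/- With notation as above (b'_n(N, d) the explicit alternating sum, δ = max d_i, n = N − r ≥ 0), one has b'_n(N, d) ≤ C(N+1, n) · (δ+1)^N. -/

import Mathlib

/-!
Each term of `b'_n(N, d)` is bounded in absolute value. Bounding `d^ν ≤ δ^c` and counting
`#M(c) = C(c-1, c-r)` by stars and bars, the `c`-th term is at most
`C(N+1, c+1) C(c-1, c-r) δ^c ≤ C(N+1, n) C(N, c) δ^c`, where the binomial inequality comes from
`C(N+1, c+1) C(c+1, r+1) = C(N+1, r+1) C(N-r, c-r)`. Since `r ≥ 1` the sum over `c` misses the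
`c = 0` term of the binomial expansion of `(δ+1)^N`, which leaves room for the term `n + 1`.
-/

open Finset

/-- `tuplesM r c` : the set of `r`-tuples of positive integers summing to `c`. -/
def tuplesM (r c : ℕ) : Finset (Fin r → ℕ) :=
  (Finset.Nat.antidiagonalTuple r c).filter fun ν => ∀ i, 1 ≤ ν i

/-- The primitive middle Betti number `b'_n(N, d)` of a nonsingular complete
intersection of codimension `r` and multidegree `d` in `ℙ^N` (`n = N − r`). -/
def bprime (N r : ℕ) (d : Fin r → ℕ) : ℤ :=
  (-1) ^ (N - r + 1) * (N - r + 1) +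
    (-1) ^ N * ∑ c ∈ Finset.Icc r N, (-1) ^ c * ((N + 1).choose (c + 1) : ℤ) *
      ∑ ν ∈ tuplesM r c, ∏ i, (d i : ℤ) ^ ν i

lemma neg_one_pow_mul_le_abs {R : Type*} [Ring R] [LinearOrder R] [IsOrderedRing R]
    (k : ℕ) (x : R) : (-1) ^ k * x ≤ |x| :=
  (le_abs_self _).trans_eq (by rw [abs_mul, abs_neg_one_pow, one_mul])

theorem Finset.Nat.card_antidiagonalTuple (k n : ℕ) :
    #(antidiagonalTuple k n) = (k + n - 1).choose n := by
  rw [← Fintype.card_coe, Fintype.card_congr ((Equiv.subtypeEquivRight fun _ =>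
    mem_antidiagonalTuple).trans (Sym.equivNatSumOfFintype (Fin k) n).symm),
    Sym.card_sym_eq_choose, Fintype.card_fin]

lemma prod_pow_le_sup_pow_sum {ι : Type*} [Fintype ι] (d ν : ι → ℕ) :
    ∏ i, d i ^ ν i ≤ univ.sup d ^ ∑ i, ν i := by
  rw [← prod_pow_eq_pow_sum]
  exact prod_le_prod' fun i _ => Nat.pow_le_pow_left (le_sup (mem_univ i)) _

lemma sub_add_one_le_choose (N r : ℕ) : N - r + 1 ≤ (N + 1).choose (N - r) := by
  simpa using Nat.choose_le_choose (N - r) (show N - r + 1 ≤ N + 1 by omega)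

lemma choose_mul_choose_le {N r c : ℕ} (hrc : r ≤ c) (hcN : c ≤ N) :
    (N + 1).choose (c + 1) * (c - 1).choose (c - r) ≤ (N + 1).choose (N - r) * N.choose c :=
  calc (N + 1).choose (c + 1) * (c - 1).choose (c - r)
      ≤ (N + 1).choose (c + 1) * (c + 1).choose (r + 1) := by
        rw [← Nat.choose_symm_of_eq_add (show c + 1 = (c - r) + (r + 1) by omega)]
        gcongr
        omega
    _ = (N + 1).choose (N - r) * (N - r).choose (N - c) := by
        rw [Nat.choose_mul (by omega), Nat.add_sub_add_right, Nat.add_sub_add_right,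
          Nat.choose_symm_of_eq_add (show N + 1 = (r + 1) + (N - r) by omega),
          Nat.choose_symm_of_eq_add (show N - r = (c - r) + (N - c) by omega)]
    _ ≤ (N + 1).choose (N - r) * N.choose c := by
        rw [← Nat.choose_symm hcN]
        gcongr
        omega

lemma one_add_sum_Icc_choose_mul_pow_le {r : ℕ} (hr : 1 ≤ r) (N x : ℕ) :
    1 + ∑ c ∈ Icc r N, N.choose c * x ^ c ≤ (x + 1) ^ N := by
  rw [add_pow, range_eq_Ico, sum_eq_sum_Ico_succ_bot N.succ_pos]
  refine add_le_add (by simp) <| (sum_le_sum_of_subset fun c hc => ?_).trans_eq <|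
    sum_congr rfl fun c _ => by push_cast; ring
  simp only [mem_Icc, mem_Ico] at hc ⊢
  omega

lemma mem_tuplesM {r c : ℕ} {ν : Fin r → ℕ} :
    ν ∈ tuplesM r c ↔ ∑ i, ν i = c ∧ ∀ i, 1 ≤ ν i := by
  simp [tuplesM, Finset.Nat.mem_antidiagonalTuple]

lemma card_tuplesM {r c : ℕ} (hrc : r ≤ c) : #(tuplesM r c) = (c - 1).choose (c - r) := by
  have h : #(tuplesM r c) = #(Finset.Nat.antidiagonalTuple r (c - r)) := by
    refine card_nbij' (· - 1) (· + 1) (fun ν hν => ?_) (fun μ hμ => ?_)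
      (fun ν hν => ?_) (fun μ _ => by ext; simp)
    · obtain ⟨hsum, hpos⟩ := mem_tuplesM.1 hν
      have h : ∑ i, (ν i - 1) + ∑ _i : Fin r, 1 = c := by
        rw [← sum_add_distrib, ← hsum]
        exact sum_congr rfl fun i _ => Nat.sub_add_cancel (hpos i)
      simp only [sum_const, card_univ, Fintype.card_fin, smul_eq_mul, mul_one] at h
      simp only [mem_coe, Finset.Nat.mem_antidiagonalTuple, Pi.sub_apply, Pi.one_apply]
      omega
    · rw [mem_coe, Finset.Nat.mem_antidiagonalTuple] at hμ
      refine mem_tuplesM.2 ⟨?_, fun i => by simp⟩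
      simp only [Pi.add_apply, Pi.one_apply, sum_add_distrib, hμ, sum_const, card_univ,
        Fintype.card_fin, smul_eq_mul, mul_one]
      omega
    · obtain ⟨-, hpos⟩ := mem_tuplesM.1 hν
      ext i
      simp [Nat.sub_add_cancel (hpos i)]
  rw [h, Finset.Nat.card_antidiagonalTuple]
  congr 1
  omega

lemma sum_tuplesM_prod_pow_le {r c : ℕ} (hrc : r ≤ c) (d : Fin r → ℕ) :
    ∑ ν ∈ tuplesM r c, ∏ i, d i ^ ν i ≤ (c - 1).choose (c - r) * univ.sup d ^ c := by
  rw [← card_tuplesM hrc, ← smul_eq_mul]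
  refine sum_le_card_nsmul _ _ _ fun ν hν => ?_
  rw [← (mem_tuplesM.1 hν).1]
  exact prod_pow_le_sup_pow_sum d ν

def bprimeMajorant (N r : ℕ) (d : Fin r → ℕ) : ℕ :=
  N - r + 1 + ∑ c ∈ Icc r N, (N + 1).choose (c + 1) * ∑ ν ∈ tuplesM r c, ∏ i, d i ^ ν i

lemma bprime_le_bprimeMajorant {N r : ℕ} (hrN : r ≤ N) (d : Fin r → ℕ) :
    bprime N r d ≤ bprimeMajorant N r d := by
  unfold bprime bprimeMajorant
  push_cast [Nat.cast_sub hrN]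
  gcongr ?_ + ?_
  · exact (neg_one_pow_mul_le_abs _ _).trans_eq (abs_of_nonneg (by omega))
  · refine (neg_one_pow_mul_le_abs _ _).trans <| (abs_sum_le_sum_abs _ _).trans_eq <|
      sum_congr rfl fun c _ => ?_
    rw [abs_mul, abs_mul, abs_neg_one_pow, one_mul, Nat.abs_cast, abs_of_nonneg (by positivity)]

lemma bprimeMajorant_le {r : ℕ} (hr : 1 ≤ r) (N : ℕ) (d : Fin r → ℕ) :
    bprimeMajorant N r d ≤ (N + 1).choose (N - r) * (univ.sup d + 1) ^ N :=
  calc bprimeMajorant N r d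
      ≤ (N + 1).choose (N - r) +
          ∑ c ∈ Icc r N, (N + 1).choose (N - r) * (N.choose c * univ.sup d ^ c) := by
        refine add_le_add (sub_add_one_le_choose N r) (sum_le_sum fun c hc => ?_)
        obtain ⟨hrc, hcN⟩ := mem_Icc.1 hc
        calc (N + 1).choose (c + 1) * ∑ ν ∈ tuplesM r c, ∏ i, d i ^ ν i
            ≤ (N + 1).choose (c + 1) * ((c - 1).choose (c - r) * univ.sup d ^ c) := by
              gcongr
              exact sum_tuplesM_prod_pow_le hrc d
          _ ≤ (N + 1).choose (N - r) * (N.choose c * univ.sup d ^ c) := by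
              rw [← mul_assoc, ← mul_assoc]
              exact Nat.mul_le_mul_right _ (choose_mul_choose_le hrc hcN)
    _ = (N + 1).choose (N - r) * (1 + ∑ c ∈ Icc r N, N.choose c * univ.sup d ^ c) := by
        rw [mul_add, mul_sum, mul_one]
    _ ≤ (N + 1).choose (N - r) * (univ.sup d + 1) ^ N := by
        gcongr
        exact one_add_sum_Icc_choose_mul_pow_le hr N _

theorem bprime_le_coarse_general (N r : ℕ) (hr : 1 ≤ r) (hrN : r ≤ N) (d : Fin r → ℕ) :
    bprime N r d ≤ ((N + 1).choose (N - r) : ℤ) *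
      ((Finset.univ.sup d : ℕ) + 1 : ℤ) ^ N :=
  (bprime_le_bprimeMajorant hrN d).trans (mod_cast bprimeMajorant_le hr N d)

/-- Coarse bound for the primitive middle Betti number:
`b'_n(N,d) ≤ C(N+1,n)·(δ+1)^N` with `n = N − r` and `δ = max dᵢ`. -/
theorem bprime_le_coarse (N r : ℕ) (hr : 1 ≤ r) (hrN : r ≤ N) (d : Fin r → ℕ)
    (hd : ∀ i, 1 ≤ d i) :
    bprime N r d ≤ ((N + 1).choose (N - r) : ℤ) *
      ((Finset.univ.sup d : ℕ) + 1 : ℤ) ^ N :=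
  bprime_le_coarse_general N r hr hrN d
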